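/- arXiv:2212.13346 — 2 statements merged into one kernel-verified Lean document; each statement's English description precedes it below -/
import Mathlib

section
/- In the ET protocol with N = 2n, a malicious Bob's overall success probability is at most ε₂ := max_{t ∈ {n,...,N}} [ ((N−n)!·t!)/(N!·(t−n)!) · Σ_{u=t−n}^{N−n} C(N−n, u) q^u (1−q)^{N−n−u} ], where q = ⌈r/l − 1⌉·2^{−l}. -/
open Finset
noncomputable def Btail (m k : ℕ) (p : ℝ) : ℝ :=
  ∑ u ∈ Finset.Icc k m, (m.choose u : ℝ) * p ^ u * (1 - p) ^ (m - u)

lemma Btail_nonneg {p : ℝ} (h0 : 0 ≤ p) (h1 : p ≤ 1) (m k : ℕ) : 0 ≤ Btail m k p :=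
  Finset.sum_nonneg fun u _ => mul_nonneg
    (mul_nonneg (Nat.cast_nonneg _) (pow_nonneg h0 _)) (pow_nonneg (by linarith) _)

lemma Btail_zero (p : ℝ) (m : ℕ) : Btail m 0 p = 1 := by
  have h := add_pow p (1 - p) m
  simp only [add_sub_cancel, one_pow] at h
  rw [Btail]
  rw [Nat.range_eq_Icc_zero_sub_one (m+1) (Nat.succ_ne_zero m)] at h
  simp only [Nat.add_sub_cancel] at h
  conv_rhs => rw [h]
  exact Finset.sum_congr rfl fun u _ => by ring

lemma Btail_anti {p : ℝ} (h0 : 0 ≤ p) (h1 : p ≤ 1) (m : ℕ) {k k' : ℕ} (h : k ≤ k') :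
    Btail m k' p ≤ Btail m k p :=
  Finset.sum_le_sum_of_subset_of_nonneg (Finset.Icc_subset_Icc_left h)
    (fun u _ _ => mul_nonneg (mul_nonneg (Nat.cast_nonneg _) (pow_nonneg h0 _))
      (pow_nonneg (by linarith) _))

lemma Btail_rec (p : ℝ) (m k : ℕ) :
    Btail (m + 1) (k + 1) p = p * Btail m k p + (1 - p) * Btail m (k + 1) p := by
  have hshift : ∑ u ∈ Finset.Icc (k+1) (m+1), ((m+1).choose u : ℝ) * p ^ u * (1-p) ^ (m+1-u)
      = ∑ v ∈ Finset.Icc k m, ((m+1).choose (v+1) : ℝ) * p ^ (v+1) * (1-p) ^ (m-v) := by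
    apply Finset.sum_nbij' (fun u => u - 1) (fun v => v + 1)
    · intro u hu; simp only [Finset.mem_Icc] at *; omega
    · intro v hv; simp only [Finset.mem_Icc] at *; omega
    · intro u hu; simp only [Finset.mem_Icc] at hu; omega
    · intro v hv; omega
    · intro u hu; simp only [Finset.mem_Icc] at hu
      have h1 : u - 1 + 1 = u := by omega
      have h2 : m - (u - 1) = m + 1 - u := by omega
      rw [h1, h2]
  simp only [Btail]
  rw [hshift]
  have hsplit : ∀ v ∈ Finset.Icc k m, ((m+1).choose (v+1) : ℝ) * p ^ (v+1) * (1-p) ^ (m-v)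
      = p * ((m.choose v : ℝ) * p ^ v * (1-p) ^ (m-v))
        + ((m.choose (v+1) : ℝ) * p ^ (v+1) * (1-p) ^ (m-v)) := by
    intro v _
    rw [Nat.choose_succ_succ, Nat.cast_add]
    ring
  rw [Finset.sum_congr rfl hsplit, Finset.sum_add_distrib, ← Finset.mul_sum]
  have e2 : ∑ v ∈ Finset.Icc k m, ((m).choose (v+1) : ℝ) * p ^ (v+1) * (1-p) ^ (m-v)
      = (1 - p) * ∑ u ∈ Finset.Icc (k+1) m, ((m).choose u : ℝ) * p ^ u * (1-p) ^ (m-u) := by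
    rcases le_or_gt k m with hkm | hkm
    swap
    · rw [Finset.Icc_eq_empty (by omega), Finset.Icc_eq_empty (by omega)]
      simp
    have hshift2 : ∑ v ∈ Finset.Icc k m, ((m).choose (v+1) : ℝ) * p ^ (v+1) * (1-p) ^ (m-v)
        = ∑ w ∈ Finset.Icc (k+1) (m+1), ((m).choose w : ℝ) * p ^ w * (1-p) ^ (m+1-w) := by
      apply Finset.sum_nbij' (fun v => v + 1) (fun w => w - 1)
      · intro u hu; simp only [Finset.mem_Icc] at *; omega
      · intro v hv; simp only [Finset.mem_Icc] at *; omega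
      · intro u hu; omega
      · intro v hv; simp only [Finset.mem_Icc] at hv; omega
      · intro v hv; simp only [Finset.mem_Icc] at hv
        have : m + 1 - (v+1) = m - v := by omega
        rw [this]
    rw [hshift2, Finset.sum_Icc_succ_top (by omega : k+1 ≤ m+1)]
    simp only [Nat.choose_succ_self, Nat.cast_zero, zero_mul, add_zero]
    rw [Finset.mul_sum]
    apply Finset.sum_congr rfl
    intro w hw
    simp only [Finset.mem_Icc] at hw
    have : m + 1 - w = (m - w) + 1 := by omega
    rw [this]
    ring
  rw [e2]

lemma Btail_mono {p q : ℝ} (hp0 : 0 ≤ p) (hpq : p ≤ q) (hq1 : q ≤ 1) (m k : ℕ) :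
    Btail m k p ≤ Btail m k q := by
  induction m generalizing k with
  | zero =>
    rcases Nat.eq_zero_or_pos k with rfl | hk
    · rw [Btail_zero, Btail_zero]
    · rw [Btail, Btail, Finset.Icc_eq_empty (by omega), Finset.sum_empty, Finset.sum_empty]
  | succ m ih =>
    rcases Nat.eq_zero_or_pos k with rfl | hk
    · rw [Btail_zero, Btail_zero]
    · obtain ⟨k, rfl⟩ := Nat.exists_eq_add_of_le hk
      simp only [add_comm 1 k] at *
      rw [Btail_rec, Btail_rec]
      have h1 : Btail m k p ≤ Btail m k q := ih k
      have h2 : Btail m (k+1) p ≤ Btail m (k+1) q := ih (k+1)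
      have h3 : Btail m (k+1) q ≤ Btail m k q := Btail_anti (by linarith) hq1 m (by omega)
      nlinarith [Btail_nonneg (le_trans hp0 hpq) hq1 m k, Btail_nonneg (le_trans hp0 hpq) hq1 m (k+1)]

section
variable {N : ℕ} {K : Type} [Fintype K] [DecidableEq K]

lemma indep_card (a : Fin N) (A : Finset K) (P : (Fin N → K) → Prop) [DecidablePred P]
    (hP : ∀ g v, P (Function.update g a v) ↔ P g) :
    (univ.filter (fun g : Fin N → K => g a ∈ A ∧ P g)).card * Fintype.card K
      = A.card * (univ.filter (fun g : Fin N → K => P g)).card := by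
  rw [← Finset.card_univ (α := K), ← Finset.card_product, ← Finset.card_product]
  apply Finset.card_nbij' (fun gv => (gv.1 a, Function.update gv.1 a gv.2))
    (fun kg => (Function.update kg.2 a kg.1, kg.2 a))
  · rintro ⟨g, v⟩ hg
    simp only [Finset.mem_coe, Finset.mem_product, Finset.mem_filter, Finset.mem_univ, true_and] at *
    exact ⟨hg.1.1, (hP g v).2 hg.1.2⟩
  · rintro ⟨k, g⟩ hg
    simp only [Finset.mem_coe, Finset.mem_product, Finset.mem_filter, Finset.mem_univ, true_and] at *
    refine ⟨⟨by simpa using hg.1, (hP g k).2 hg.2⟩, trivial⟩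
  · rintro ⟨g, v⟩ hg
    simp only [Function.update_self, Prod.mk.injEq]
    exact ⟨by rw [Function.update_idem, Function.update_eq_self], trivial⟩
  · rintro ⟨k, g⟩ hg
    simp only [Function.update_self, Prod.mk.injEq]
    exact ⟨trivial, by rw [Function.update_idem, Function.update_eq_self]⟩

end


section
variable {N : ℕ} {K : Type} [Fintype K] [DecidableEq K] [Nonempty K]

lemma main_count {q : ℝ} (hq0 : 0 ≤ q) (hq1 : q ≤ 1) (C : Finset K)
    (hC : (C.card : ℝ) ≤ q * Fintype.card K) (J : Finset (Fin N)) (k0 : ℕ) :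
    ((univ.filter (fun g : Fin N → K =>
        k0 ≤ (J.filter (fun j => g j ∈ C)).card)).card : ℝ)
      ≤ (Fintype.card K : ℝ) ^ N * Btail J.card k0 q := by
  have hκpos : 0 < (Fintype.card K : ℝ) := by
    exact_mod_cast Fintype.card_pos
  have hκN : (Finset.univ : Finset (Fin N → K)).card = Fintype.card K ^ N := by
    rw [Finset.card_univ, Fintype.card_fun, Fintype.card_fin]
  induction J using Finset.induction_on generalizing k0 with
  | empty =>
    rcases Nat.eq_zero_or_pos k0 with rfl | hk
    · rw [Finset.filter_true_of_mem (fun _ _ => Nat.zero_le _), hκN, Finset.card_empty,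
        Btail_zero, mul_one]
      push_cast
      exact le_refl _
    · have : (Finset.univ.filter (fun g : Fin N → K =>
          k0 ≤ ((∅ : Finset (Fin N)).filter (fun j => g j ∈ C)).card)) = ∅ := by
        apply Finset.filter_false_of_mem
        intro g _
        simp only [Finset.filter_empty, Finset.card_empty]
        omega
      rw [this]
      simp only [Finset.card_empty, Nat.cast_zero]
      exact mul_nonneg (by positivity) (Btail_nonneg hq0 hq1 _ _)
  | @insert a J ha ih =>
    rcases Nat.eq_zero_or_pos k0 with rfl | hk
    · rw [Finset.filter_true_of_mem (fun _ _ => Nat.zero_le _), hκN,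
        Btail_zero, mul_one]
      push_cast
      exact le_refl _
    obtain ⟨k, rfl⟩ : ∃ k, k0 = k + 1 := ⟨k0 - 1, by omega⟩
    set cnt : (Fin N → K) → ℕ := fun g => (J.filter (fun j => g j ∈ C)).card with hcnt
    have hcard_ins : ∀ g : Fin N → K,
        ((insert a J).filter (fun j => g j ∈ C)).card
          = cnt g + (if g a ∈ C then 1 else 0) := by
      intro g
      rw [Finset.filter_insert]
      by_cases h : g a ∈ C
      · rw [if_pos h, if_pos h,
          Finset.card_insert_of_notMem (fun hm => ha (Finset.mem_of_mem_filter a hm))]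
      · rw [if_neg h, if_neg h, add_zero]
    have hsplit : (univ.filter (fun g : Fin N → K =>
            k+1 ≤ ((insert a J).filter (fun j => g j ∈ C)).card))
        = (univ.filter (fun g : Fin N → K => g a ∈ C ∧ k ≤ cnt g))
          ∪ (univ.filter (fun g : Fin N → K => g a ∈ Cᶜ ∧ k+1 ≤ cnt g)) := by
      ext g
      simp only [Finset.mem_union, Finset.mem_filter, Finset.mem_univ, true_and, hcard_ins g,
        Finset.mem_compl]
      by_cases h : g a ∈ C <;> simp only [h, if_pos, if_neg, not_false_iff, true_and,
        false_and, not_true, false_or, or_false, if_true, if_false, not_not] <;> omega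
    have hdisj : Disjoint (univ.filter (fun g : Fin N → K => g a ∈ C ∧ k ≤ cnt g))
        (univ.filter (fun g : Fin N → K => g a ∈ Cᶜ ∧ k+1 ≤ cnt g)) := by
      rw [Finset.disjoint_filter]
      intro g _ hg hg2
      exact (Finset.mem_compl.mp hg2.1) hg.1
    have hupdate : ∀ (g : Fin N → K) (v : K), cnt (Function.update g a v) = cnt g := by
      intro g v
      simp only [hcnt]
      congr 1
      apply Finset.filter_congr
      intro j hj
      rw [Function.update_of_ne (by rintro rfl; exact ha hj)]
    have e1 := indep_card a C (fun g => k ≤ cnt g) (fun g v => by simp only [hupdate])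
    have e2 := indep_card a Cᶜ (fun g => k+1 ≤ cnt g) (fun g v => by simp only [hupdate])
    set Nk := (univ.filter (fun g : Fin N → K => k ≤ cnt g)).card with hNk
    set N1 := (univ.filter (fun g : Fin N → K => k+1 ≤ cnt g)).card with hN1
    have hmono : N1 ≤ Nk := Finset.card_le_card (by
      intro g hg
      simp only [Finset.mem_filter] at *
      exact ⟨hg.1, le_trans (Nat.le_succ k) hg.2⟩)
    have ihk := ih k
    have ih1 := ih (k+1)
    have hcompl : (Cᶜ.card : ℝ) = (Fintype.card K : ℝ) - C.card := by
      rw [Finset.card_compl, Nat.cast_sub (Finset.card_le_univ C)]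
    have htot : ((univ.filter (fun g : Fin N → K =>
            k+1 ≤ ((insert a J).filter (fun j => g j ∈ C)).card)).card : ℝ)
            * (Fintype.card K : ℝ)
        = (C.card : ℝ) * Nk + ((Fintype.card K : ℝ) - C.card) * N1 := by
      have c1eq : ((univ.filter (fun g : Fin N → K => g a ∈ C ∧ k ≤ cnt g)).card : ℝ)
          * (Fintype.card K : ℝ) = (C.card : ℝ) * Nk := by exact_mod_cast e1
      have c2eq : ((univ.filter (fun g : Fin N → K => g a ∈ Cᶜ ∧ k+1 ≤ cnt g)).card : ℝ)
          * (Fintype.card K : ℝ) = ((Fintype.card K : ℝ) - C.card) * N1 := by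
        rw [← hcompl]; exact_mod_cast e2
      rw [hsplit, Finset.card_union_of_disjoint hdisj, Nat.cast_add, add_mul, c1eq, c2eq]
    rw [Finset.card_insert_of_notMem ha, Btail_rec]
    have hC0 : (0:ℝ) ≤ C.card := Nat.cast_nonneg _
    have hNk0 : (0:ℝ) ≤ Nk := Nat.cast_nonneg _
    have hN10 : (0:ℝ) ≤ N1 := Nat.cast_nonneg _
    have hmono' : (N1:ℝ) ≤ Nk := Nat.cast_le.mpr hmono
    rw [← mul_le_mul_iff_of_pos_right hκpos, htot]
    have key1 : (C.card : ℝ) * Nk + ((Fintype.card K : ℝ) - C.card) * N1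
        ≤ q * (Fintype.card K : ℝ) * Nk + (1-q) * (Fintype.card K : ℝ) * N1 := by
      nlinarith [mul_nonneg (sub_nonneg.2 hC) (sub_nonneg.2 hmono')]
    have key2 : q * (Fintype.card K : ℝ) * Nk ≤ q * (Fintype.card K : ℝ) *
        ((Fintype.card K : ℝ) ^ N * Btail J.card k q) :=
      mul_le_mul_of_nonneg_left ihk (mul_nonneg hq0 hκpos.le)
    have key3 : (1-q) * (Fintype.card K : ℝ) * N1 ≤ (1-q) * (Fintype.card K : ℝ) *
        ((Fintype.card K : ℝ) ^ N * Btail J.card (k+1) q) :=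
      mul_le_mul_of_nonneg_left ih1 (mul_nonneg (by linarith) hκpos.le)
    calc (C.card : ℝ) * Nk + ((Fintype.card K : ℝ) - C.card) * N1
        ≤ q * (Fintype.card K : ℝ) * Nk + (1-q) * (Fintype.card K : ℝ) * N1 := key1
      _ ≤ q * (Fintype.card K : ℝ) * ((Fintype.card K : ℝ) ^ N * Btail J.card k q)
          + (1-q) * (Fintype.card K : ℝ) * ((Fintype.card K : ℝ) ^ N * Btail J.card (k+1) q) :=
          add_le_add key2 key3
      _ = (Fintype.card K : ℝ) ^ N * (q * Btail J.card k q + (1 - q) * Btail J.card (k + 1) q)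
          * (Fintype.card K : ℝ) := by ring

end

/-- Security of the ET protocol (N = 2n): the TTP picks a uniformly random `n`-subset `Ω`
of `{1,…,N}` and keys `k^A` agreeing with Bob's keys `k^B` on `Ω` and uniform and
independent elsewhere (modelled by a uniform `g : Fin N → K` used off `Ω`).
A malicious Bob, knowing `m^A` and `k^B` (but not `Ω` nor the off-`Ω` part of `k^A`),
commits to some `m^B* ≠ m^A`; he succeeds if `Ω ⊆ T := {j : f(k^B_j, m^B*) = f(k^B_j, m^A)}`
and `|{j : f(k^A_j, m^A) = f(k^A_j, m^B*)}| ≥ |T|`.  If `f` is almost-universal₂ with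
collision probability at most `q`, his success probability is at most
`ε₂ = max_{t ∈ [n,N]} (N−n)!·t!/(N!·(t−n)!) · ∑_{u=t−n}^{N−n} C(N−n,u) q^u (1−q)^{N−n−u}`. -/
theorem stmt_9 (n N : ℕ) (hn : 1 ≤ n) (hN : N = 2 * n)
    (K S M : Type) [Fintype K] [Nonempty K] [DecidableEq K] [DecidableEq S]
    (f : K → M → S) (q : ℝ) (hq0 : 0 ≤ q) (hq1 : q ≤ 1)
    (hf : ∀ m m' : M, m ≠ m' →
      ((Finset.univ.filter (fun k : K => f k m = f k m')).card : ℝ)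
        ≤ q * (Fintype.card K : ℝ))
    (mA mB : M) (hmm : mB ≠ mA) (kB : Fin N → K) :
    (((((Finset.univ : Finset (Fin N)).powersetCard n) ×ˢ
          (Finset.univ : Finset (Fin N → K))).filter (fun p =>
        p.1 ⊆ Finset.univ.filter (fun j : Fin N => f (kB j) mB = f (kB j) mA) ∧
        (Finset.univ.filter (fun j : Fin N => f (kB j) mB = f (kB j) mA)).card ≤
          (Finset.univ.filter (fun j : Fin N =>
            f (if j ∈ p.1 then kB j else p.2 j) mA =
              f (if j ∈ p.1 then kB j else p.2 j) mB)).card)).card : ℝ)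
      / ((((Finset.univ : Finset (Fin N)).powersetCard n).card : ℝ)
          * (Fintype.card K : ℝ) ^ N)
    ≤ (Finset.Icc n N).sup' (Finset.nonempty_Icc.2 (by omega)) (fun t =>
        (((N - n).factorial : ℝ) * (t.factorial : ℝ))
            / ((N.factorial : ℝ) * ((t - n).factorial : ℝ)) *
          ∑ u ∈ Finset.Icc (t - n) (N - n),
            ((N - n).choose u : ℝ) * q ^ u * (1 - q) ^ (N - n - u)) := by
  classical
  have hNn : n ≤ N := by omega
  set T := (univ.filter (fun j : Fin N => f (kB j) mB = f (kB j) mA)) with hTdef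
  set t := T.card with htdef
  set C := (univ.filter (fun k : K => f k mA = f k mB)) with hCdef
  have hCq : (C.card : ℝ) ≤ q * Fintype.card K := hf mA mB (Ne.symm hmm)
  have htN : t ≤ N := by
    calc t ≤ (univ : Finset (Fin N)).card := Finset.card_le_univ T
      _ = N := by simp
  set B := Btail (N - n) (t - n) q with hBdef
  have hmemT : ∀ j, j ∈ T ↔ f (kB j) mB = f (kB j) mA := fun j =>
    ⟨fun h => (Finset.mem_filter.mp h).2, fun h => Finset.mem_filter.mpr ⟨Finset.mem_univ _, h⟩⟩
  have hmemC : ∀ x, x ∈ C ↔ f x mA = f x mB := fun x =>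
    ⟨fun h => (Finset.mem_filter.mp h).2, fun h => Finset.mem_filter.mpr ⟨Finset.mem_univ _, h⟩⟩
  have hBnn : 0 ≤ B := Btail_nonneg hq0 hq1 _ _
  have hκpos : (0:ℝ) < Fintype.card K := by exact_mod_cast Fintype.card_pos
  have hinner : ∀ Ω ∈ (univ : Finset (Fin N)).powersetCard n,
      ((univ.filter (fun g : Fin N → K => Ω ⊆ T ∧ t ≤ (univ.filter (fun j =>
          f (if j ∈ Ω then kB j else g j) mA =
            f (if j ∈ Ω then kB j else g j) mB)).card)).card : ℝ)
      ≤ if Ω ⊆ T then (Fintype.card K : ℝ)^N * B else 0 := by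
    intro Ω hΩ
    have hΩcard : Ω.card = n := (Finset.mem_powersetCard.mp hΩ).2
    by_cases hsub : Ω ⊆ T
    · rw [if_pos hsub]
      have hcompl : Ωᶜ.card = N - n := by
        rw [Finset.card_compl, hΩcard]
        simp
      have hsubset : (univ.filter (fun g : Fin N → K => Ω ⊆ T ∧ t ≤ (univ.filter (fun j =>
          f (if j ∈ Ω then kB j else g j) mA =
            f (if j ∈ Ω then kB j else g j) mB)).card))
          ⊆ (univ.filter (fun g : Fin N → K =>
              t - n ≤ (Ωᶜ.filter (fun j => g j ∈ C)).card)) := by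
        intro g hg
        simp only [Finset.mem_filter, Finset.mem_univ, true_and] at *
        obtain ⟨-, hle⟩ := hg
        have hid : (univ.filter (fun j => f (if j ∈ Ω then kB j else g j) mA =
            f (if j ∈ Ω then kB j else g j) mB)) = Ω ∪ (Ωᶜ.filter (fun j => g j ∈ C)) := by
          ext j
          by_cases hj : j ∈ Ω
          · have hfj := (hmemT j).mp (hsub hj)
            simp only [hj, if_true, Finset.mem_union, Finset.mem_filter, Finset.mem_univ,
              true_and, Finset.mem_compl, hfj]
            simp [hj]
          · simp only [hj, if_false, Finset.mem_union, Finset.mem_filter, Finset.mem_univ,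
              true_and, Finset.mem_compl, hmemC (g j)]
            tauto
        have hdisj : Disjoint Ω (Ωᶜ.filter (fun j => g j ∈ C)) := by
          rw [Finset.disjoint_left]
          intro x hx hx2
          exact (Finset.mem_compl.mp (Finset.mem_of_mem_filter x hx2)) hx
        rw [hid, Finset.card_union_of_disjoint hdisj, hΩcard] at hle
        omega
      calc ((univ.filter (fun g : Fin N → K => Ω ⊆ T ∧ t ≤ (univ.filter (fun j =>
              f (if j ∈ Ω then kB j else g j) mA =
                f (if j ∈ Ω then kB j else g j) mB)).card)).card : ℝ)
          ≤ ((univ.filter (fun g : Fin N → K =>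
              t - n ≤ (Ωᶜ.filter (fun j => g j ∈ C)).card)).card : ℝ) := by
            exact_mod_cast Finset.card_le_card hsubset
        _ ≤ (Fintype.card K : ℝ)^N * Btail (Ωᶜ.card) (t-n) q :=
            main_count hq0 hq1 C hCq Ωᶜ (t-n)
        _ = (Fintype.card K : ℝ)^N * B := by rw [hcompl]
    · rw [if_neg hsub]
      have hempty : (univ.filter (fun g : Fin N → K => Ω ⊆ T ∧ t ≤ (univ.filter (fun j =>
          f (if j ∈ Ω then kB j else g j) mA =
            f (if j ∈ Ω then kB j else g j) mB)).card)) = ∅ :=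
        Finset.filter_false_of_mem (fun g _ h => hsub h.1)
      rw [hempty]
      simp
  have hNum : ((((univ : Finset (Fin N)).powersetCard n ×ˢ (univ : Finset (Fin N → K))).filter
      (fun p => p.1 ⊆ T ∧ t ≤ (univ.filter (fun j : Fin N =>
        f (if j ∈ p.1 then kB j else p.2 j) mA =
          f (if j ∈ p.1 then kB j else p.2 j) mB)).card)).card)
      = ∑ Ω ∈ (univ : Finset (Fin N)).powersetCard n,
        (univ.filter (fun g : Fin N → K => Ω ⊆ T ∧ t ≤ (univ.filter (fun j =>
          f (if j ∈ Ω then kB j else g j) mA =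
            f (if j ∈ Ω then kB j else g j) mB)).card)).card := by
    rw [Finset.card_filter, Finset.sum_product]
    exact Finset.sum_congr rfl (fun Ω _ => (Finset.card_filter _ _).symm)
  have hkey : ((((univ : Finset (Fin N)).powersetCard n ×ˢ (univ : Finset (Fin N → K))).filter
      (fun p => p.1 ⊆ T ∧ t ≤ (univ.filter (fun j : Fin N =>
        f (if j ∈ p.1 then kB j else p.2 j) mA =
          f (if j ∈ p.1 then kB j else p.2 j) mB)).card)).card : ℝ)
      ≤ (t.choose n : ℝ) * ((Fintype.card K : ℝ)^N * B) := by
    rw [hNum]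
    push_cast
    calc ∑ Ω ∈ (univ : Finset (Fin N)).powersetCard n,
          ((univ.filter (fun g : Fin N → K => Ω ⊆ T ∧ t ≤ (univ.filter (fun j =>
            f (if j ∈ Ω then kB j else g j) mA =
              f (if j ∈ Ω then kB j else g j) mB)).card)).card : ℝ)
        ≤ ∑ Ω ∈ (univ : Finset (Fin N)).powersetCard n,
            (if Ω ⊆ T then (Fintype.card K : ℝ)^N * B else 0) :=
          Finset.sum_le_sum hinner
      _ = (((univ : Finset (Fin N)).powersetCard n).filter (fun Ω => Ω ⊆ T)).card
            • ((Fintype.card K : ℝ)^N * B) := by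
          rw [Finset.sum_ite, Finset.sum_const, Finset.sum_const_zero, add_zero]
      _ = (t.choose n : ℝ) * ((Fintype.card K : ℝ)^N * B) := by
          have hfe : ((univ : Finset (Fin N)).powersetCard n).filter (fun Ω => Ω ⊆ T)
              = T.powersetCard n := by
            ext Ω
            simp only [Finset.mem_filter, Finset.mem_powersetCard]
            constructor
            · rintro ⟨⟨-, hc⟩, hs⟩; exact ⟨hs, hc⟩
            · rintro ⟨hs, hc⟩; exact ⟨⟨Finset.subset_univ Ω, hc⟩, hs⟩
          rw [hfe, Finset.card_powersetCard, nsmul_eq_mul]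
  have hDcard : (((univ : Finset (Fin N)).powersetCard n).card) = N.choose n := by
    rw [Finset.card_powersetCard]
    simp
  have hDpos : (0:ℝ) < (((univ : Finset (Fin N)).powersetCard n).card : ℝ)
      * (Fintype.card K : ℝ) ^ N := by
    apply mul_pos
    · rw [hDcard]
      exact_mod_cast Nat.choose_pos hNn
    · positivity
  rw [div_le_iff₀ hDpos]
  set F : ℕ → ℝ := fun s =>
    (((N - n).factorial : ℝ) * (s.factorial : ℝ))
        / ((N.factorial : ℝ) * ((s - n).factorial : ℝ)) *
      ∑ u ∈ Finset.Icc (s - n) (N - n),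
        ((N - n).choose u : ℝ) * q ^ u * (1 - q) ^ (N - n - u) with hF
  have hFnonneg : ∀ s, 0 ≤ F s := by
    intro s
    simp only [hF]
    apply mul_nonneg
    · positivity
    · apply Finset.sum_nonneg
      intro u _
      have h1q : (0:ℝ) ≤ 1 - q := by linarith
      positivity
  by_cases ht : n ≤ t
  · have hcoef : (t.choose n : ℝ) / (N.choose n : ℝ)
        = (((N - n).factorial : ℝ) * (t.factorial : ℝ))
          / ((N.factorial : ℝ) * ((t - n).factorial : ℝ)) := by
      have h1 : ((t.choose n : ℝ)) * (n.factorial : ℝ) * ((t-n).factorial : ℝ)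
          = (t.factorial : ℝ) := by exact_mod_cast Nat.choose_mul_factorial_mul_factorial ht
      have h2 : ((N.choose n : ℝ)) * (n.factorial : ℝ) * ((N-n).factorial : ℝ)
          = (N.factorial : ℝ) := by exact_mod_cast Nat.choose_mul_factorial_mul_factorial hNn
      have hc2 : (0:ℝ) < (N.choose n : ℝ) := by exact_mod_cast Nat.choose_pos hNn
      rw [div_eq_div_iff hc2.ne' (by positivity), ← h1, ← h2]
      ring
    have h3 : (t.choose n : ℝ) / (N.choose n : ℝ) * B = F t := by
      simp only [hF]
      rw [hcoef, hBdef, Btail]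
    have hc2 : (0:ℝ) < (N.choose n : ℝ) := by exact_mod_cast Nat.choose_pos hNn
    calc ((((univ : Finset (Fin N)).powersetCard n ×ˢ (univ : Finset (Fin N → K))).filter
        (fun p => p.1 ⊆ T ∧ t ≤ (univ.filter (fun j : Fin N =>
          f (if j ∈ p.1 then kB j else p.2 j) mA =
            f (if j ∈ p.1 then kB j else p.2 j) mB)).card)).card : ℝ)
        ≤ (t.choose n : ℝ) * ((Fintype.card K : ℝ)^N * B) := hkey
      _ = ((t.choose n : ℝ) / (N.choose n : ℝ) * B)
            * ((N.choose n : ℝ) * (Fintype.card K : ℝ)^N) := by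
          field_simp
      _ = F t * ((N.choose n : ℝ) * (Fintype.card K : ℝ)^N) := by rw [h3]
      _ ≤ ((Finset.Icc n N).sup' (Finset.nonempty_Icc.2 hNn) F)
            * ((N.choose n : ℝ) * (Fintype.card K : ℝ)^N) :=
          mul_le_mul_of_nonneg_right
            (Finset.le_sup' F (Finset.mem_Icc.mpr ⟨ht, htN⟩)) (by positivity)
      _ = ((Finset.Icc n N).sup' (Finset.nonempty_Icc.2 hNn) F)
            * ((((univ : Finset (Fin N)).powersetCard n).card : ℝ)
              * (Fintype.card K : ℝ)^N) := by rw [hDcard]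
  · have hchoose0 : (t.choose n : ℝ) = 0 := by
      rw [Nat.choose_eq_zero_of_lt (Nat.lt_of_not_le ht)]
      simp
    refine le_trans hkey ?_
    rw [hchoose0, zero_mul]
    apply mul_nonneg
    · exact le_trans (hFnonneg n) (Finset.le_sup' F (Finset.mem_Icc.mpr ⟨le_refl n, hNn⟩))
    · exact le_of_lt hDpos
end

section
/- For ε₁ ≤ 2^{−8}, r ≥ 2^8, n = ⌈3·log₂(1/ε₁)⌉, N = 2n, l = ⌈log₂ r⌉, and q = ⌈r/l−1⌉·2^{−l}: for every integer t with n ≤ t ≤ 2n, the product p_et(t)·p_dr(t) ≤ ε₁, where p_et(t) = (n!·t!)/((2n)!·(t−n)!) and p_dr(t) = Σ_{u=t−n}^{n} C(n,u) q^u (1−q)^{n−u}. -/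
open Finset Real

lemma fact_prod_aux (a : ℕ) : ∀ k : ℕ, (a + k).factorial
    = a.factorial * ∏ i ∈ Finset.range k, (a + 1 + i)
  | 0 => by simp
  | k + 1 => by
    rw [Finset.prod_range_succ, ← mul_assoc, ← fact_prod_aux a k,
      show a + (k+1) = (a+k) + 1 by ring, Nat.factorial_succ]
    ring

theorem stmt_11 (ε₁ : ℝ) (r : ℕ) (hε0 : 0 < ε₁) (hε : ε₁ ≤ 2 ^ (-8 : ℤ))
    (hr : 2 ^ 8 ≤ r) (n N l : ℕ) (hn : n = ⌈3 * Real.logb 2 (1 / ε₁)⌉₊)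
    (hN : N = 2 * n) (hl : l = ⌈Real.logb 2 (r : ℝ)⌉₊)
    (q : ℝ) (hq : q = (⌈(r : ℝ) / (l : ℝ) - 1⌉₊ : ℝ) * ((2 : ℝ) ^ l)⁻¹)
    (t : ℕ) (ht1 : n ≤ t) (ht2 : t ≤ 2 * n) :
    ((n.factorial : ℝ) * (t.factorial : ℝ))
        / (((2 * n).factorial : ℝ) * ((t - n).factorial : ℝ)) *
      ∑ u ∈ Finset.Icc (t - n) n, (n.choose u : ℝ) * q ^ u * (1 - q) ^ (n - u)
    ≤ ε₁ := by
  have one_lt_two : (1:ℝ) < 2 := by norm_num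
  -- key : 2 ^ (-(n:ℝ)/3) ≤ ε₁
  have hnlog : 3 * Real.logb 2 (1 / ε₁) ≤ (n : ℝ) := by
    rw [hn]; exact Nat.le_ceil _
  have key : (2:ℝ) ^ (-(n:ℝ)/3) ≤ ε₁ := by
    have h1 : -(n:ℝ)/3 ≤ Real.logb 2 ε₁ := by
      rw [one_div, Real.logb_inv] at hnlog
      linarith
    calc (2:ℝ) ^ (-(n:ℝ)/3) ≤ (2:ℝ) ^ (Real.logb 2 ε₁) :=
          Real.rpow_le_rpow_of_exponent_le (by norm_num) h1
      _ = ε₁ := Real.rpow_logb (by norm_num) (by norm_num) hε0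
  -- bounds on q
  have hrR : (256:ℝ) ≤ (r:ℝ) := by exact_mod_cast hr
  have hr0 : (0:ℝ) < r := by linarith
  have hlogr8 : (8:ℝ) ≤ Real.logb 2 (r:ℝ) := by
    have : Real.logb 2 ((2:ℝ)^(8:ℕ)) ≤ Real.logb 2 (r:ℝ) :=
      Real.logb_le_logb_of_le one_lt_two (by positivity) (le_trans (by norm_num) hrR)
    simpa [Real.logb_pow, Real.logb_self_eq_one] using this
  have hl8 : (8:ℝ) ≤ (l:ℝ) := le_trans hlogr8 (hl ▸ Nat.le_ceil _)
  have hl0 : (0:ℝ) < l := by linarith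
  have hr2l : (r:ℝ) ≤ (2:ℝ)^l := by
    have h1 : Real.logb 2 (r:ℝ) ≤ (l:ℝ) := hl ▸ Nat.le_ceil _
    have := (Real.logb_le_iff_le_rpow one_lt_two hr0).mp h1
    rwa [Real.rpow_natCast] at this
  have hlr : (l:ℝ) ≤ (r:ℝ) := by
    have hlt : Real.logb 2 (r:ℝ) < (r:ℝ) := by
      rw [Real.logb_lt_iff_lt_rpow one_lt_two hr0, Real.rpow_natCast]
      exact_mod_cast Nat.lt_two_pow_self (n := r)
    have : l ≤ r := by
      rw [hl]
      exact Nat.ceil_le.mpr hlt.le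
    exact_mod_cast this
  have hq0 : 0 ≤ q := by
    rw [hq]; positivity
  have hq8 : q ≤ 1/8 := by
    have hrl1 : (0:ℝ) ≤ (r:ℝ)/(l:ℝ) - 1 := by
      rw [sub_nonneg, le_div_iff₀ hl0, one_mul]; exact hlr
    have hceil : (⌈(r : ℝ) / (l : ℝ) - 1⌉₊ : ℝ) ≤ (r:ℝ)/(l:ℝ) := by
      have := Nat.ceil_lt_add_one hrl1
      linarith
    have h2l0 : (0:ℝ) < (2:ℝ)^l := by positivity
    have : q ≤ (r:ℝ)/(l:ℝ) * ((2:ℝ)^l)⁻¹ := by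
      rw [hq]
      exact mul_le_mul_of_nonneg_right hceil (by positivity)
    calc q ≤ (r:ℝ)/(l:ℝ) * ((2:ℝ)^l)⁻¹ := this
      _ ≤ (r:ℝ)/(l:ℝ) * (r:ℝ)⁻¹ := by
          apply mul_le_mul_of_nonneg_left _ (by positivity)
          exact inv_anti₀ hr0 hr2l
      _ = (l:ℝ)⁻¹ := by field_simp
      _ ≤ 1/8 := by rw [one_div]; exact inv_anti₀ (by norm_num) hl8
  have hq1 : q ≤ 1 := by linarith
  have h1q : 0 ≤ 1 - q := by linarith
  set pet : ℝ := ((n.factorial : ℝ) * (t.factorial : ℝ))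
        / (((2 * n).factorial : ℝ) * ((t - n).factorial : ℝ)) with hpet
  set pdr : ℝ := ∑ u ∈ Finset.Icc (t - n) n, (n.choose u : ℝ) * q ^ u * (1 - q) ^ (n - u)
    with hpdr
  have hden : (0:ℝ) < ((2 * n).factorial : ℝ) * ((t - n).factorial : ℝ) := by positivity
  have hpet0 : 0 ≤ pet := by positivity
  have hpdr0 : 0 ≤ pdr := by
    apply Finset.sum_nonneg
    intro u _
    positivity
  rcases le_or_gt (2*t) (3*n) with hcase | hcase
  · -- small t : pet ≤ (3/4)^n ≤ 2^(-n/3) ≤ ε₁, pdr ≤ 1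
    have hpdr1 : pdr ≤ 1 := by
      have hsub : Finset.Icc (t - n) n ⊆ Finset.range (n+1) := by
        intro x hx
        rw [Finset.mem_range, Nat.lt_succ_iff]
        exact (Finset.mem_Icc.mp hx).2
      have h1 : pdr ≤ ∑ u ∈ Finset.range (n+1),
          (n.choose u : ℝ) * q ^ u * (1 - q) ^ (n - u) := by
        apply Finset.sum_le_sum_of_subset_of_nonneg hsub
        intro u _ _; positivity
      have h2 : ∑ u ∈ Finset.range (n+1),
          (n.choose u : ℝ) * q ^ u * (1 - q) ^ (n - u) = (q + (1-q))^n := by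
        rw [add_pow]
        apply Finset.sum_congr rfl
        intro u _; ring
      rw [h2] at h1
      simpa using h1
    have a := t - n
    have hta : t = (t - n) + n := (Nat.sub_add_cancel ht1).symm
    have h2a : 2 * (t - n) ≤ n := by omega
    have hnat : n.factorial * t.factorial * 4^n
        ≤ (2*n).factorial * (t-n).factorial * 3^n := by
      have e1 : t.factorial = (t-n).factorial * ∏ i ∈ Finset.range n, (t - n + 1 + i) := by
        conv_lhs => rw [hta]
        exact fact_prod_aux (t-n) n
      have e2 : (2*n).factorial = n.factorial * ∏ i ∈ Finset.range n, (n + 1 + i) := by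
        rw [two_mul]; exact fact_prod_aux n n
      have hP : (∏ i ∈ Finset.range n, (t - n + 1 + i)) * 4^n
          ≤ (∏ i ∈ Finset.range n, (n + 1 + i)) * 3^n := by
        have e4 : (4:ℕ)^n = ∏ _i ∈ Finset.range n, 4 := by
          rw [Finset.prod_const, Finset.card_range]
        have e3 : (3:ℕ)^n = ∏ _i ∈ Finset.range n, 3 := by
          rw [Finset.prod_const, Finset.card_range]
        rw [e4, e3, ← Finset.prod_mul_distrib, ← Finset.prod_mul_distrib]
        apply Finset.prod_le_prod'
        intro i hi
        rw [Finset.mem_range] at hi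
        omega
      calc n.factorial * t.factorial * 4^n
          = n.factorial * (t-n).factorial *
            ((∏ i ∈ Finset.range n, (t - n + 1 + i)) * 4^n) := by rw [e1]; ring
        _ ≤ n.factorial * (t-n).factorial *
            ((∏ i ∈ Finset.range n, (n + 1 + i)) * 3^n) :=
            Nat.mul_le_mul_left _ hP
        _ = (2*n).factorial * (t-n).factorial * 3^n := by rw [e2]; ring
    have hpet34 : pet ≤ (3/4:ℝ)^n := by
      rw [hpet, div_le_iff₀ hden]
      have h4 : (0:ℝ) < (4:ℝ)^n := by positivity
      rw [show ((3:ℝ)/4)^n * (((2 * n).factorial : ℝ) * ((t - n).factorial : ℝ))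
          = (3:ℝ)^n * (((2 * n).factorial : ℝ) * ((t - n).factorial : ℝ)) / (4:ℝ)^n
          from by rw [div_pow]; ring, le_div_iff₀ h4]
      have := hnat
      have hc : ((n.factorial * t.factorial * 4^n : ℕ) : ℝ)
          ≤ (((2*n).factorial * (t-n).factorial * 3^n : ℕ) : ℝ) := by exact_mod_cast this
      push_cast at hc
      linarith
    have h34 : ((3:ℝ)/4)^n ≤ (2:ℝ) ^ (-(n:ℝ)/3) := by
      have hbase : (3/4:ℝ) ≤ (2:ℝ) ^ (-(1:ℝ)/3) := by
        apply le_of_pow_le_pow_left₀ (n := 3) (by norm_num) (by positivity)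
        have e : ((2:ℝ) ^ (-(1:ℝ)/3))^(3:ℕ) = (2:ℝ) ^ ((-(1:ℝ)/3) * 3) := by
          rw [← Real.rpow_natCast ((2:ℝ) ^ (-(1:ℝ)/3)) 3, ← Real.rpow_mul (by norm_num)]
          norm_num
        rw [e, show (-(1:ℝ)/3) * 3 = -1 by ring, Real.rpow_neg_one]
        norm_num
      calc ((3:ℝ)/4)^n ≤ ((2:ℝ) ^ (-(1:ℝ)/3))^n := pow_le_pow_left₀ (by norm_num) hbase n
        _ = (2:ℝ) ^ (-(n:ℝ)/3) := by
            rw [← Real.rpow_natCast ((2:ℝ) ^ (-(1:ℝ)/3)) n, ← Real.rpow_mul (by norm_num)]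
            congr 1; ring
    calc pet * pdr ≤ pet := mul_le_of_le_one_right hpet0 hpdr1
      _ ≤ (3/4:ℝ)^n := hpet34
      _ ≤ (2:ℝ) ^ (-(n:ℝ)/3) := h34
      _ ≤ ε₁ := key
  · -- large t : pet ≤ 1, pdr ≤ 2^(n - 3(t-n)) ≤ 2^(-n/3) ≤ ε₁
    have hpet1 : pet ≤ 1 := by
      rw [hpet, div_le_one hden]
      have h1 := Nat.choose_mul_factorial_mul_factorial ht1
      have h2 := Nat.choose_mul_factorial_mul_factorial (by omega : n ≤ 2*n)
      have h3 := Nat.choose_le_choose n ht2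
      have hnat : n.factorial * t.factorial ≤ (2*n).factorial * (t-n).factorial := by
        calc n.factorial * t.factorial
            = (t.choose n * n.factorial * (t-n).factorial) * n.factorial := by rw [h1]; ring
          _ ≤ ((2*n).choose n * n.factorial * (t-n).factorial) * n.factorial := by
              apply Nat.mul_le_mul_right
              exact Nat.mul_le_mul_right _ (Nat.mul_le_mul_right _ h3)
          _ = ((2*n).choose n * n.factorial * (2*n - n).factorial) * (t-n).factorial := by
              rw [show 2*n - n = n by omega]; ring
          _ = (2*n).factorial * (t-n).factorial := by rw [h2]
      exact_mod_cast hnat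
    have h2a : (n:ℝ) + 1 ≤ 2 * ((t:ℝ) - n) := by
      have h : n + 1 ≤ 2 * (t - n) := by omega
      have h' : ((n:ℝ)) + 1 ≤ 2 * ((t - n : ℕ) : ℝ) := by exact_mod_cast h
      rw [Nat.cast_sub ht1] at h'
      push_cast at h'
      linarith
    have hpdr_le : pdr ≤ q^(t-n) * 2^n := by
      have step1 : pdr ≤ ∑ u ∈ Finset.Icc (t - n) n, (n.choose u : ℝ) * q ^ (t-n) := by
        apply Finset.sum_le_sum
        intro u hu
        rw [Finset.mem_Icc] at hu
        have hqu : q ^ u ≤ q ^ (t-n) := pow_le_pow_of_le_one hq0 hq1 hu.1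
        have h1qu : (1-q) ^ (n-u) ≤ 1 := pow_le_one₀ h1q (by linarith)
        calc (n.choose u : ℝ) * q ^ u * (1 - q) ^ (n - u)
            ≤ (n.choose u : ℝ) * q ^ u * 1 := by
              apply mul_le_mul_of_nonneg_left h1qu; positivity
          _ = (n.choose u : ℝ) * q ^ u := by ring
          _ ≤ (n.choose u : ℝ) * q ^ (t-n) := by
              apply mul_le_mul_of_nonneg_left hqu; positivity
      have step2 : ∑ u ∈ Finset.Icc (t - n) n, (n.choose u : ℝ) * q ^ (t-n)
          ≤ 2^n * q^(t-n) := by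
        rw [← Finset.sum_mul]
        apply mul_le_mul_of_nonneg_right _ (by positivity)
        have hsub : Finset.Icc (t - n) n ⊆ Finset.range (n+1) := by
          intro x hx
          rw [Finset.mem_range, Nat.lt_succ_iff]
          exact (Finset.mem_Icc.mp hx).2
        calc ∑ u ∈ Finset.Icc (t - n) n, (n.choose u : ℝ)
            ≤ ∑ u ∈ Finset.range (n+1), (n.choose u : ℝ) := by
              apply Finset.sum_le_sum_of_subset_of_nonneg hsub
              intro u _ _; positivity
          _ = ((∑ u ∈ Finset.range (n+1), n.choose u : ℕ) : ℝ) := by push_cast; rfl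
          _ = 2^n := by rw [Nat.sum_range_choose]; push_cast; rfl
      calc pdr ≤ 2^n * q^(t-n) := le_trans step1 step2
        _ = q^(t-n) * 2^n := by ring
    have hfinal : q^(t-n) * 2^n ≤ (2:ℝ) ^ (-(n:ℝ)/3) := by
      have hq18 : q^(t-n) ≤ ((1:ℝ)/8)^(t-n) :=
        pow_le_pow_left₀ hq0 hq8 _
      have e18 : ((1:ℝ)/8)^(t-n) = (2:ℝ) ^ (-(3:ℝ) * (t-n : ℕ)) := by
        have h8 : ((1:ℝ)/8) = (2:ℝ) ^ (-(3:ℝ)) := by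
          rw [show (-(3:ℝ)) = -(((3:ℕ)):ℝ) by norm_num, Real.rpow_neg (by norm_num),
            Real.rpow_natCast]
          norm_num
        rw [h8, ← Real.rpow_natCast ((2:ℝ) ^ (-(3:ℝ))) (t-n), ← Real.rpow_mul (by norm_num)]
      have e2n : (2:ℝ)^n = (2:ℝ) ^ ((n:ℕ):ℝ) := (Real.rpow_natCast 2 n).symm
      have hcast : ((t - n : ℕ) : ℝ) = (t:ℝ) - (n:ℝ) := by
        rw [Nat.cast_sub ht1]
      calc q^(t-n) * 2^n ≤ ((1:ℝ)/8)^(t-n) * 2^n := by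
            apply mul_le_mul_of_nonneg_right hq18 (by positivity)
        _ = (2:ℝ) ^ (-(3:ℝ) * (t-n : ℕ) + (n:ℝ)) := by
            rw [e18, e2n, ← Real.rpow_add (by norm_num)]
        _ ≤ (2:ℝ) ^ (-(n:ℝ)/3) := by
            apply Real.rpow_le_rpow_of_exponent_le (by norm_num)
            rw [hcast]
            linarith
    calc pet * pdr ≤ pdr := mul_le_of_le_one_left hpdr0 hpet1
      _ ≤ q^(t-n) * 2^n := hpdr_le
      _ ≤ (2:ℝ) ^ (-(n:ℝ)/3) := hfinal
      _ ≤ ε₁ := key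
end
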